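/- Let N ≥ 16 and 0 < δ < 7/2 be real, let α be real with 1 − δ/28 < α < 2 − δ/7, and let y ≥ (log N)^{14/δ}. Then Σ_{(log N)^{14/δ} < p ≤ y} p^{1−α} ≤ C · y^{2−α}/((2−α)^2 log y) for an absolute constant C, the sum running over primes p. -/

import Mathlib

/-- The finite set of primes `p ≤ x`. -/
noncomputable def primesUpTo (x : ℝ) : Finset ℕ :=
  (Finset.range (⌊x⌋₊ + 1)).filter Nat.Prime

open Finset Real

lemma mem_primesUpTo' {x : ℝ} {p : ℕ} (hx : 0 ≤ x) (hp : p ∈ primesUpTo x) :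
    p.Prime ∧ (p : ℝ) ≤ x := by
  rw [primesUpTo, Finset.mem_filter, Finset.mem_range, Nat.lt_succ_iff] at hp
  exact ⟨hp.2, le_trans (Nat.cast_le.2 hp.1) (Nat.floor_le hx)⟩

lemma mem_primesUpTo_of {x : ℝ} {p : ℕ} (hp : p.Prime) (h : (p : ℝ) ≤ x) :
    p ∈ primesUpTo x := by
  rw [primesUpTo, Finset.mem_filter, Finset.mem_range, Nat.lt_succ_iff]
  exact ⟨Nat.le_floor h, hp⟩

lemma theta_le (x : ℝ) (hx : 0 ≤ x) :
    ∑ p ∈ primesUpTo x, Real.log p ≤ x * Real.log 4 := by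
  have h1 : ∑ p ∈ primesUpTo x, Real.log p
      = Real.log (∏ p ∈ primesUpTo x, (p : ℝ)) := by
    rw [Real.log_prod]
    intro p hp
    exact_mod_cast ((mem_primesUpTo' hx hp).1.pos).ne'
  have h2 : (∏ p ∈ primesUpTo x, (p : ℝ)) = ((primorial ⌊x⌋₊ : ℕ) : ℝ) := by
    rw [primorial]
    push_cast
    rfl
  rw [h1, h2]
  have h3 : ((primorial ⌊x⌋₊ : ℕ) : ℝ) ≤ ((4 ^ ⌊x⌋₊ : ℕ) : ℝ) := by
    exact_mod_cast primorial_le_4_pow ⌊x⌋₊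
  have h4 : Real.log ((primorial ⌊x⌋₊ : ℕ) : ℝ) ≤ Real.log ((4:ℝ) ^ ⌊x⌋₊) := by
    apply Real.log_le_log (by exact_mod_cast primorial_pos ⌊x⌋₊)
    push_cast at h3 ⊢
    exact h3
  calc Real.log ((primorial ⌊x⌋₊ : ℕ) : ℝ) ≤ Real.log ((4:ℝ) ^ ⌊x⌋₊) := h4
    _ = (⌊x⌋₊ : ℝ) * Real.log 4 := by rw [Real.log_pow]
    _ ≤ x * Real.log 4 := by
        apply mul_le_mul_of_nonneg_right (Nat.floor_le hx)
        positivity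

lemma primesUpTo_empty {x : ℝ} (hx : x < 2) : primesUpTo x = ∅ := by
  rw [Finset.eq_empty_iff_forall_notMem]
  intro p hp
  rw [primesUpTo, Finset.mem_filter, Finset.mem_range, Nat.lt_succ_iff] at hp
  have h2 := hp.2.two_le
  rcases le_or_gt 0 x with h | h
  · have : (p : ℝ) ≤ x := le_trans (Nat.cast_le.2 hp.1) (Nat.floor_le h)
    have : (2 : ℝ) ≤ x := le_trans (by exact_mod_cast h2) this
    linarith
  · have : ⌊x⌋₊ = 0 := Nat.floor_eq_zero.2 (by linarith)
    omega

lemma cheb_dyadic (β s : ℝ) (hs0 : 0 < s) (hs9 : s ≤ 9/8) (hsb : s = 1 + β) :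
    ∀ n : ℕ, ∀ x : ℝ, 1 ≤ x → x ≤ 2 ^ n →
      ∑ p ∈ primesUpTo x, (p : ℝ) ^ β * Real.log p ≤ 16 / s * x ^ s := by
  intro n
  induction n with
  | zero =>
    intro x hx1 hx2
    simp only [pow_zero] at hx2
    rw [primesUpTo_empty (by linarith)]
    simp only [Finset.sum_empty]
    positivity
  | succ n ih =>
    intro x hx1 hx2
    by_cases h2 : x < 2
    · rw [primesUpTo_empty h2]
      simp only [Finset.sum_empty]
      positivity
    · push_neg at h2
      have hx0 : (0 : ℝ) < x := by linarith
      have hβ1 : -1 < β := by linarith [hsb ▸ hs0]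
      -- split the sum
      set T := primesUpTo x with hT
      have hsplit := Finset.sum_filter_add_sum_filter_not T
        (fun p : ℕ => (p : ℝ) ≤ x / 2) (fun p : ℕ => (p : ℝ) ^ β * Real.log p)
      -- A bound
      have hA : ∑ p ∈ T.filter (fun p : ℕ => (p : ℝ) ≤ x / 2), (p : ℝ) ^ β * Real.log p
          ≤ 16 / s * (x / 2) ^ s := by
        have hsub : T.filter (fun p : ℕ => (p : ℝ) ≤ x / 2) ⊆ primesUpTo (x / 2) := by
          intro p hp
          rw [Finset.mem_filter] at hp
          exact mem_primesUpTo_of (mem_primesUpTo' hx0.le hp.1).1 hp.2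
        have hsum : ∑ p ∈ T.filter (fun p : ℕ => (p : ℝ) ≤ x / 2), (p : ℝ) ^ β * Real.log p
            ≤ ∑ p ∈ primesUpTo (x / 2), (p : ℝ) ^ β * Real.log p := by
          apply Finset.sum_le_sum_of_subset_of_nonneg hsub
          intro p hp _
          have h1 : (1 : ℝ) ≤ (p : ℝ) := by
            exact_mod_cast (mem_primesUpTo' (by linarith) hp).1.one_lt.le
          have := Real.log_nonneg h1
          positivity
        refine hsum.trans (ih (x / 2) (by linarith) ?_)
        rw [pow_succ] at hx2
        linarith
      -- B bound
      have hB : ∑ p ∈ T.filter (fun p : ℕ => ¬ (p : ℝ) ≤ x / 2), (p : ℝ) ^ β * Real.log p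
          ≤ 2 * x ^ β * (x * Real.log 4) := by
        have hstep : ∑ p ∈ T.filter (fun p : ℕ => ¬ (p : ℝ) ≤ x / 2), (p : ℝ) ^ β * Real.log p
            ≤ ∑ p ∈ T.filter (fun p : ℕ => ¬ (p : ℝ) ≤ x / 2), 2 * x ^ β * Real.log p := by
          apply Finset.sum_le_sum
          intro p hp
          rw [Finset.mem_filter] at hp
          obtain ⟨hpT, hpx2⟩ := hp
          push_neg at hpx2
          obtain ⟨hpp, hpx⟩ := mem_primesUpTo' hx0.le hpT
          have hlogp : 0 ≤ Real.log p := Real.log_nonneg (by exact_mod_cast hpp.one_lt.le)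
          have hpb : (p : ℝ) ^ β ≤ 2 * x ^ β := by
            rcases le_or_gt 0 β with hb | hb
            · have h1 : (p : ℝ) ^ β ≤ x ^ β := Real.rpow_le_rpow (by positivity) hpx hb
              nlinarith [Real.rpow_nonneg hx0.le β]
            · have h1 : (p : ℝ) ^ β ≤ (x / 2) ^ β :=
                Real.rpow_le_rpow_of_nonpos (by linarith) hpx2.le hb.le
              have h2 : (x / 2) ^ β = x ^ β * 2 ^ (-β) := by
                rw [Real.div_rpow hx0.le (by norm_num), Real.rpow_neg (by norm_num)]
                ring
              have h3 : (2 : ℝ) ^ (-β) ≤ (2 : ℝ) ^ (1 : ℝ) :=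
                Real.rpow_le_rpow_of_exponent_le (by norm_num) (by linarith)
              rw [Real.rpow_one] at h3
              have hxb : (0 : ℝ) ≤ x ^ β := Real.rpow_nonneg hx0.le β
              calc (p : ℝ) ^ β ≤ (x / 2) ^ β := h1
                _ = x ^ β * 2 ^ (-β) := h2
                _ ≤ x ^ β * 2 := by nlinarith
                _ = 2 * x ^ β := by ring
          exact mul_le_mul_of_nonneg_right hpb hlogp
        have hstep2 : ∑ p ∈ T.filter (fun p : ℕ => ¬ (p : ℝ) ≤ x / 2), 2 * x ^ β * Real.log p
            = 2 * x ^ β * ∑ p ∈ T.filter (fun p : ℕ => ¬ (p : ℝ) ≤ x / 2), Real.log p := by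
          rw [Finset.mul_sum]
        have hstep3 : ∑ p ∈ T.filter (fun p : ℕ => ¬ (p : ℝ) ≤ x / 2), Real.log p
            ≤ ∑ p ∈ T, Real.log p := by
          apply Finset.sum_le_sum_of_subset_of_nonneg (Finset.filter_subset _ _)
          intro p hp _
          exact Real.log_nonneg (by exact_mod_cast (mem_primesUpTo' hx0.le hp).1.one_lt.le)
        have htheta := theta_le x hx0.le
        have hxb : (0 : ℝ) ≤ x ^ β := Real.rpow_nonneg hx0.le β
        calc ∑ p ∈ T.filter (fun p : ℕ => ¬ (p : ℝ) ≤ x / 2), (p : ℝ) ^ β * Real.log p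
            ≤ 2 * x ^ β * ∑ p ∈ T.filter (fun p : ℕ => ¬ (p : ℝ) ≤ x / 2), Real.log p := by
              rw [← hstep2]; exact hstep
          _ ≤ 2 * x ^ β * (x * Real.log 4) := by
              apply mul_le_mul_of_nonneg_left (hstep3.trans htheta) (by positivity)
      -- combine
      have hxs : x ^ β * x = x ^ s := by
        rw [hsb, add_comm, Real.rpow_add hx0, Real.rpow_one]
      have hhalf : (x / 2) ^ s = x ^ s * 2 ^ (-s) := by
        rw [Real.div_rpow hx0.le (by norm_num), Real.rpow_neg (by norm_num)]
        ring
      -- scalar inequality : 16/s * 2^(-s) + 2 * log 4 ≤ 16/s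
      have hkey : 16 / s * (2:ℝ) ^ (-s) + 2 * Real.log 4 ≤ 16 / s := by
        have hl2 : 0.6931471803 < Real.log 2 := Real.log_two_gt_d9
        have hl2' : Real.log 2 < 0.6931471808 := Real.log_two_lt_d9
        set u := s * Real.log 2 with hudef
        have hu : 0 < u := by positivity
        have hu3 : u ≤ 3 := by rw [hudef]; nlinarith
        have hepos : (0:ℝ) < 1 + u := by linarith
        have hexp : 1 + u ≤ Real.exp u := by
          have := Real.add_one_le_exp u
          linarith
        have h2s : (2 : ℝ) ^ (-s) = 1 / Real.exp u := by
          rw [Real.rpow_def_of_pos (by norm_num : (0:ℝ) < 2), hudef, one_div, ← Real.exp_neg]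
          ring_nf
        have h2sle : (2 : ℝ) ^ (-s) ≤ 1 / (1 + u) := by
          rw [h2s]
          apply div_le_div_of_nonneg_left (by norm_num) hepos hexp
        have hlog4 : Real.log 4 = 2 * Real.log 2 := by
          rw [show (4:ℝ) = 2 ^ (2:ℕ) by norm_num, Real.log_pow]
          push_cast; ring
        have hA : 16 / s * (2:ℝ) ^ (-s) ≤ 16 / s * (1 / (1 + u)) :=
          mul_le_mul_of_nonneg_left h2sle (by positivity)
        have e1 : (16 / s * (1 / (1 + u))) * (s * (1 + u)) = 16 := by
          field_simp
        have e2 : (16 / s) * s = 16 := by field_simp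
        have hgoal : 16 / s * (1 / (1 + u)) + 4 * Real.log 2 ≤ 16 / s := by
          nlinarith [mul_pos hs0 hepos, hu, hu3, e1, e2, hs0]
        rw [hlog4]
        linarith
      -- combine
      have e3 : 16 / s * (x / 2) ^ s + 2 * x ^ β * (x * Real.log 4)
          = (16 / s * (2:ℝ) ^ (-s) + 2 * Real.log 4) * x ^ s := by
        rw [hhalf, ← hxs]; ring
      calc ∑ p ∈ T, (p : ℝ) ^ β * Real.log p
          = (∑ p ∈ T.filter (fun p : ℕ => (p : ℝ) ≤ x / 2), (p : ℝ) ^ β * Real.log p)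
            + ∑ p ∈ T.filter (fun p : ℕ => ¬ (p : ℝ) ≤ x / 2), (p : ℝ) ^ β * Real.log p :=
            hsplit.symm
        _ ≤ 16 / s * (x / 2) ^ s + 2 * x ^ β * (x * Real.log 4) := add_le_add hA hB
        _ = (16 / s * (2:ℝ) ^ (-s) + 2 * Real.log 4) * x ^ s := e3
        _ ≤ 16 / s * x ^ s :=
            mul_le_mul_of_nonneg_right hkey (Real.rpow_nonneg hx0.le s)

lemma cheb_all (β s : ℝ) (hs0 : 0 < s) (hs9 : s ≤ 9/8) (hsb : s = 1 + β)
    (x : ℝ) (hx : 1 ≤ x) :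
    ∑ p ∈ primesUpTo x, (p : ℝ) ^ β * Real.log p ≤ 16 / s * x ^ s := by
  obtain ⟨n, hn⟩ := pow_unbounded_of_one_lt x (one_lt_two (α := ℝ))
  exact cheb_dyadic β s hs0 hs9 hsb n x hx hn.le

set_option maxHeartbeats 1000000 in
/-- For `N ≥ 16`, `0 < δ < 7/2`, `1 - δ/28 < α < 2 - δ/7`
and `y ≥ (log N)^{14/δ}`:
`∑_{(log N)^{14/δ} < p ≤ y} p^{1-α} ≤ C y^{2-α}/((2-α)² log y)` for an
absolute constant `C`. -/
theorem stmt_17 :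
    ∃ C : ℝ, 0 < C ∧
      ∀ (N δ α y : ℝ), 16 ≤ N → 0 < δ → δ < 7 / 2 →
        1 - δ / 28 < α → α < 2 - δ / 7 →
        Real.log N ^ (14 / δ) ≤ y →
        (∑ p ∈ (primesUpTo y).filter
            (fun p : ℕ => Real.log N ^ (14 / δ) < (p : ℝ)),
          (p : ℝ) ^ (1 - α)) ≤
          C * y ^ (2 - α) / ((2 - α) ^ 2 * Real.log y) := by
  refine ⟨100, by norm_num, ?_⟩
  intro N δ α y hN hδ0 hδ7 hα1 hα2 hy
  set L := Real.log N ^ (14/δ) with hLdef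
  set β := 1 - α with hβdef
  set s := 2 - α with hsdef
  have hsb : s = 1 + β := by rw [hsdef, hβdef]; ring
  have hs0 : 0 < s := by rw [hsdef]; nlinarith
  have hsδ : δ / 7 < s := by rw [hsdef]; linarith
  have hs9 : s ≤ 9/8 := by rw [hsdef]; nlinarith
  have hN0 : (0:ℝ) < N := by linarith
  have hlogN : 2.7182818286 < Real.log N := by
    have h16 : Real.log 16 ≤ Real.log N := Real.log_le_log (by norm_num) hN
    have he : Real.log 16 = 4 * Real.log 2 := by
      rw [show (16:ℝ) = 2 ^ (4:ℕ) by norm_num, Real.log_pow]; push_cast; ring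
    nlinarith [Real.log_two_gt_d9]
  have hlogN0 : (0:ℝ) < Real.log N := by linarith
  have hloglogN : 1 < Real.log (Real.log N) := by
    have hd9 := Real.exp_one_lt_d9
    calc (1:ℝ) = Real.log (Real.exp 1) := (Real.log_exp 1).symm
      _ < Real.log (Real.log N) := Real.log_lt_log (Real.exp_pos 1) (by linarith)
  have hlogL : Real.log L = 14 / δ * Real.log (Real.log N) := Real.log_rpow hlogN0 _
  have h14 : 4 < 14 / δ := by rw [lt_div_iff₀ hδ0]; linarith
  have hlogL4 : 4 < Real.log L := by rw [hlogL]; nlinarith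
  have hlogL14 : 14 / δ ≤ Real.log L := by rw [hlogL]; nlinarith
  have hL0 : 0 < L := Real.rpow_pos_of_pos hlogN0 _
  have hL2 : 2 ≤ L := by
    by_contra h
    push_neg at h
    have h1 : Real.log L < Real.log 2 := Real.log_lt_log hL0 h
    have h2 := Real.log_two_lt_d9
    linarith
  have hy2 : (2:ℝ) ≤ y := le_trans hL2 hy
  have hy0 : (0:ℝ) < y := by linarith
  have hy1 : (1:ℝ) ≤ y := by linarith
  have hlogy4 : 4 < Real.log y := by
    have := Real.log_le_log hL0 hy
    linarith
  have hlogy0 : 0 < Real.log y := by linarith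
  have hlogL0 : 0 < Real.log L := by linarith
  -- key inequality : log y ≤ log L * y ^ (s/2)
  have hkey : Real.log y ≤ Real.log L * y ^ (s/2) := by
    have hu : (δ/14) * Real.log y ≤ y ^ (δ/14) := by
      rw [Real.rpow_def_of_pos hy0]
      have h1 := Real.add_one_le_exp (Real.log y * (δ/14))
      nlinarith [Real.exp_pos (Real.log y * (δ/14))]
    have h1 : Real.log y ≤ (14/δ) * y ^ (δ/14) := by
      have h2 := mul_le_mul_of_nonneg_left hu (le_of_lt (by positivity : (0:ℝ) < 14/δ))
      have he : (14/δ) * ((δ/14) * Real.log y) = Real.log y := by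
        field_simp
      linarith [he ▸ h2]
    have h3 : y ^ (δ/14) ≤ y ^ (s/2) :=
      Real.rpow_le_rpow_of_exponent_le hy1 (by linarith)
    calc Real.log y ≤ (14/δ) * y ^ (δ/14) := h1
      _ ≤ Real.log L * y ^ (δ/14) :=
          mul_le_mul_of_nonneg_right hlogL14 (Real.rpow_nonneg hy0.le _)
      _ ≤ Real.log L * y ^ (s/2) := mul_le_mul_of_nonneg_left h3 hlogL0.le
  -- half-power point
  set t := y ^ ((1:ℝ)/2) with htdef
  have ht1 : (1:ℝ) ≤ t := by
    have := Real.rpow_le_rpow_of_exponent_le hy1 (by norm_num : (0:ℝ) ≤ 1/2)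
    rwa [Real.rpow_zero] at this
  have hlogt : Real.log t = Real.log y / 2 := by
    rw [htdef, Real.log_rpow hy0]; ring
  have hts : t ^ s = y ^ (s/2) := by
    rw [htdef, ← Real.rpow_mul hy0.le]
    congr 1
    ring
  set P := (primesUpTo y).filter (fun p : ℕ => L < (p:ℝ)) with hPdef
  have hmemP : ∀ p ∈ P, p.Prime ∧ (p:ℝ) ≤ y ∧ L < (p:ℝ) := by
    intro p hp
    rw [hPdef, Finset.mem_filter] at hp
    obtain ⟨h1, h2⟩ := mem_primesUpTo' hy0.le hp.1
    exact ⟨h1, h2, hp.2⟩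
  have hsplit := Finset.sum_filter_add_sum_filter_not P
    (fun p : ℕ => (p:ℝ) ≤ t) (fun p : ℕ => (p:ℝ) ^ β)
  -- Term 1 : small primes
  have hT1 : ∑ p ∈ P.filter (fun p : ℕ => (p:ℝ) ≤ t), (p:ℝ) ^ β
      ≤ 16 / s * (y ^ s / Real.log y) := by
    have h1 : ∑ p ∈ P.filter (fun p : ℕ => (p:ℝ) ≤ t), (p:ℝ) ^ β
        ≤ ∑ p ∈ P.filter (fun p : ℕ => (p:ℝ) ≤ t), (p:ℝ) ^ β * Real.log p / Real.log L := by
      apply Finset.sum_le_sum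
      intro p hp
      rw [Finset.mem_filter] at hp
      obtain ⟨hpp, hpy, hpL⟩ := hmemP p hp.1
      have hlogp : Real.log L < Real.log p := Real.log_lt_log hL0 hpL
      have hpb : (0:ℝ) ≤ (p:ℝ) ^ β := Real.rpow_nonneg (Nat.cast_nonneg p) β
      rw [le_div_iff₀ hlogL0]
      exact mul_le_mul_of_nonneg_left hlogp.le hpb
    have h2 : ∑ p ∈ P.filter (fun p : ℕ => (p:ℝ) ≤ t), (p:ℝ) ^ β * Real.log p
        ≤ ∑ p ∈ primesUpTo t, (p:ℝ) ^ β * Real.log p := by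
      apply Finset.sum_le_sum_of_subset_of_nonneg
      · intro p hp
        rw [Finset.mem_filter] at hp
        exact mem_primesUpTo_of (hmemP p hp.1).1 hp.2
      · intro p hp _
        have h1p : (1:ℝ) ≤ (p:ℝ) := by
          exact_mod_cast (mem_primesUpTo' (by linarith) hp).1.one_lt.le
        have := Real.log_nonneg h1p
        positivity
    have h3 := cheb_all β s hs0 hs9 hsb t ht1
    have h4 : y ^ (s/2) / Real.log L ≤ y ^ s / Real.log y := by
      rw [div_le_div_iff₀ hlogL0 hlogy0]
      have h5 : y ^ (s/2) * Real.log y ≤ y ^ (s/2) * (Real.log L * y ^ (s/2)) :=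
        mul_le_mul_of_nonneg_left hkey (Real.rpow_nonneg hy0.le _)
      have h6 : y ^ (s/2) * y ^ (s/2) = y ^ s := by
        rw [← Real.rpow_add hy0]
        congr 1
        ring
      nlinarith [Real.rpow_nonneg hy0.le (s/2), hlogL0]
    calc ∑ p ∈ P.filter (fun p : ℕ => (p:ℝ) ≤ t), (p:ℝ) ^ β ≤ _ := h1
      _ = (∑ p ∈ P.filter (fun p : ℕ => (p:ℝ) ≤ t), (p:ℝ) ^ β * Real.log p) / Real.log L :=
          (Finset.sum_div _ _ _).symm
      _ ≤ (16 / s * t ^ s) / Real.log L := by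
          apply div_le_div_of_nonneg_right ?_ hlogL0.le
          exact h2.trans h3
      _ = 16 / s * (y ^ (s/2) / Real.log L) := by rw [hts]; ring
      _ ≤ 16 / s * (y ^ s / Real.log y) := by
          apply mul_le_mul_of_nonneg_left h4 (by positivity)
  -- Term 2 : large primes
  have hT2 : ∑ p ∈ P.filter (fun p : ℕ => ¬ (p:ℝ) ≤ t), (p:ℝ) ^ β
      ≤ 32 / s * (y ^ s / Real.log y) := by
    have h1 : ∑ p ∈ P.filter (fun p : ℕ => ¬ (p:ℝ) ≤ t), (p:ℝ) ^ β
        ≤ ∑ p ∈ P.filter (fun p : ℕ => ¬ (p:ℝ) ≤ t),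
            2 * ((p:ℝ) ^ β * Real.log p) / Real.log y := by
      apply Finset.sum_le_sum
      intro p hp
      rw [Finset.mem_filter] at hp
      obtain ⟨hpp, hpy, hpL⟩ := hmemP p hp.1
      have hpt : t < (p:ℝ) := by
        have := hp.2
        push_neg at this
        exact this
      have hlogp : Real.log t < Real.log p := Real.log_lt_log (by linarith) hpt
      have hpb : (0:ℝ) ≤ (p:ℝ) ^ β := Real.rpow_nonneg (Nat.cast_nonneg p) β
      rw [le_div_iff₀ hlogy0]
      have h8 : Real.log y ≤ 2 * Real.log p := by linarith [hlogt]
      calc (p:ℝ) ^ β * Real.log y ≤ (p:ℝ) ^ β * (2 * Real.log p) :=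
            mul_le_mul_of_nonneg_left h8 hpb
        _ = 2 * ((p:ℝ) ^ β * Real.log p) := by ring
    have h2 : ∑ p ∈ P.filter (fun p : ℕ => ¬ (p:ℝ) ≤ t), (p:ℝ) ^ β * Real.log p
        ≤ ∑ p ∈ primesUpTo y, (p:ℝ) ^ β * Real.log p := by
      apply Finset.sum_le_sum_of_subset_of_nonneg
      · intro p hp
        rw [Finset.mem_filter] at hp
        exact mem_primesUpTo_of (hmemP p hp.1).1 (hmemP p hp.1).2.1
      · intro p hp _
        have h1p : (1:ℝ) ≤ (p:ℝ) := by
          exact_mod_cast (mem_primesUpTo' hy0.le hp).1.one_lt.le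
        have := Real.log_nonneg h1p
        positivity
    have h3 := cheb_all β s hs0 hs9 hsb y hy1
    calc ∑ p ∈ P.filter (fun p : ℕ => ¬ (p:ℝ) ≤ t), (p:ℝ) ^ β ≤ _ := h1
      _ = 2 * (∑ p ∈ P.filter (fun p : ℕ => ¬ (p:ℝ) ≤ t), (p:ℝ) ^ β * Real.log p)
            / Real.log y := by
          rw [Finset.mul_sum, Finset.sum_div]
      _ ≤ 2 * (16 / s * y ^ s) / Real.log y := by
          apply div_le_div_of_nonneg_right ?_ hlogy0.le
          have := h2.trans h3
          linarith
      _ = 32 / s * (y ^ s / Real.log y) := by ring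
  -- combine
  have hfinal : (48:ℝ) / s ≤ 100 / s ^ 2 := by
    rw [div_le_div_iff₀ hs0 (by positivity)]
    nlinarith
  have hpos : (0:ℝ) ≤ y ^ s / Real.log y := by positivity
  calc ∑ p ∈ P, (p:ℝ) ^ β
      = (∑ p ∈ P.filter (fun p : ℕ => (p:ℝ) ≤ t), (p:ℝ) ^ β)
        + ∑ p ∈ P.filter (fun p : ℕ => ¬ (p:ℝ) ≤ t), (p:ℝ) ^ β := hsplit.symm
    _ ≤ 16 / s * (y ^ s / Real.log y) + 32 / s * (y ^ s / Real.log y) := add_le_add hT1 hT2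
    _ = 48 / s * (y ^ s / Real.log y) := by ring
    _ ≤ 100 / s ^ 2 * (y ^ s / Real.log y) := mul_le_mul_of_nonneg_right hfinal hpos
    _ = 100 * y ^ s / (s ^ 2 * Real.log y) := by
        rw [div_mul_div_comm]
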